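/- (Bianchi Permutability Theorem for the hyperbolic sine-Gordon equation.) Let σ₁, σ₂ ∈ ℝ be nonzero with σ₁ ≠ σ₂, and let ω₀, ω₁, ω₂, ω₃ : ℝ² → ℝ be smooth functions such that (ω₀, ω₁) is related by the Bäcklund transformation with parameter σ₁, (ω₀, ω₂) is related by the Bäcklund transformation with parameter σ₂, and at every point cos((ω₃−ω₀)/2) ≠ 0, cos((ω₂−ω₁)/2) ≠ 0, and tan((ω₃−ω₀)/2) = ((σ₂+σ₁)/(σ₂−σ₁))·tan((ω₂−ω₁)/2). Then (ω₁, ω₃) is related by the Bäcklund transformation with parameter σ₂ and (ω₂, ω₃) is related by the Bäcklund transformation with parameter σ₁. -/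

import Mathlib

/-- Partial derivative with respect to the first variable `u`. -/
noncomputable def pdu (f : ℝ × ℝ → ℝ) (p : ℝ × ℝ) : ℝ :=
  deriv (fun u => f (u, p.2)) p.1

/-- Partial derivative with respect to the second variable `v`. -/
noncomputable def pdv (f : ℝ × ℝ → ℝ) (p : ℝ × ℝ) : ℝ :=
  deriv (fun v => f (p.1, v)) p.2

/-- The pair `(ω₀, ω₁)` is related by the Bäcklund transformation for the
hyperbolic sine-Gordon equation with parameter `σ`. -/
def BacklundSG (σ : ℝ) (ω₀ ω₁ : ℝ × ℝ → ℝ) : Prop :=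
  ∀ p : ℝ × ℝ,
    pdv ω₁ p - pdu ω₀ p =
      (σ * Real.sin (ω₁ p + ω₀ p) + σ⁻¹ * Real.sin (ω₁ p - ω₀ p)) / 2 ∧
    pdu ω₁ p - pdv ω₀ p =
      (σ * Real.sin (ω₁ p + ω₀ p) - σ⁻¹ * Real.sin (ω₁ p - ω₀ p)) / 2

section auxiliary

private lemma igen1 (σ₁ σ₂ S C sm cm sn cn X Y : ℝ)
    (hmn : σ₂ * sm = σ₁ * sn) (hm : sm ^ 2 + cm ^ 2 = 1) (hn : sn ^ 2 + cn ^ 2 = 1)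
    (hX : X ^ 2 = 1 / 2 + (cm * cn - sm * sn) / 2)
    (hY : Y ^ 2 = 1 / 2 + (cm * cn + sm * sn) / 2) :
    (σ₂ + σ₁) * X ^ 2 * (σ₂ * (S * cm - C * sm) - σ₁ * (S * cn - C * sn))
      = (σ₂ - σ₁) * Y ^ 2 * (σ₂ * (S * cm + C * sm) + σ₁ * (S * cn - C * sn)) := by
  linear_combination (-S * (σ₂ * cm * sn + σ₁ * cn * sm)
      - C * ((σ₂ + σ₁) * X ^ 2 + (σ₂ - σ₁) * Y ^ 2)) * hmn
    + S * σ₁ * σ₂ * cn * hm - S * σ₁ * σ₂ * cm * hn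
    + S * (σ₂ + σ₁) * (σ₂ * cm - σ₁ * cn) * hX
    - S * (σ₂ - σ₁) * (σ₂ * cm + σ₁ * cn) * hY

private lemma igen2 (σ₁ σ₂ S C sm cm sn cn X Y : ℝ)
    (hmn : σ₂ * sm = σ₁ * sn) (hm : sm ^ 2 + cm ^ 2 = 1) (hn : sn ^ 2 + cn ^ 2 = 1)
    (hX : X ^ 2 = 1 / 2 + (cm * cn - sm * sn) / 2)
    (hY : Y ^ 2 = 1 / 2 + (cm * cn + sm * sn) / 2) :
    (σ₂ + σ₁) * X ^ 2 * (σ₂ * (S * cm - C * sm) - σ₁ * (S * cn - C * sn))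
      = (σ₂ - σ₁) * Y ^ 2 * (σ₁ * (S * cn + C * sn) + σ₂ * (S * cm - C * sm)) := by
  linear_combination (-S * (σ₂ * cm * sn + σ₁ * cn * sm)
      - C * ((σ₂ + σ₁) * X ^ 2 - (σ₂ - σ₁) * Y ^ 2)) * hmn
    + S * σ₁ * σ₂ * cn * hm - S * σ₁ * σ₂ * cm * hn
    + S * (σ₂ + σ₁) * (σ₂ * cm - σ₁ * cn) * hX
    - S * (σ₂ - σ₁) * (σ₂ * cm + σ₁ * cn) * hY

private lemma igen3 (σ₁ σ₂ D E sm cm sn cn X Y : ℝ)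
    (hmn : σ₂ * sm = σ₁ * sn) (hm : sm ^ 2 + cm ^ 2 = 1) (hn : sn ^ 2 + cn ^ 2 = 1)
    (hX : X ^ 2 = 1 / 2 + (cm * cn - sm * sn) / 2)
    (hY : Y ^ 2 = 1 / 2 + (cm * cn + sm * sn) / 2) :
    (σ₂ + σ₁) * X ^ 2 * (σ₁ * (sn * D - cn * E) - σ₂ * (sm * D - cm * E))
      = (σ₂ - σ₁) * Y ^ 2 * (σ₁ * (sn * D + cn * E) - σ₂ * (sm * D - cm * E)) := by
  linear_combination (-E * (σ₂ * cm * sn + σ₁ * cn * sm)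
      - D * ((σ₂ + σ₁) * X ^ 2 - (σ₂ - σ₁) * Y ^ 2)) * hmn
    + E * σ₁ * σ₂ * cn * hm - E * σ₁ * σ₂ * cm * hn
    + E * (σ₂ + σ₁) * (σ₂ * cm - σ₁ * cn) * hX
    - E * (σ₂ - σ₁) * (σ₂ * cm + σ₁ * cn) * hY

private lemma igen4 (σ₁ σ₂ D E sm cm sn cn X Y : ℝ)
    (hmn : σ₂ * sm = σ₁ * sn) (hm : sm ^ 2 + cm ^ 2 = 1) (hn : sn ^ 2 + cn ^ 2 = 1)
    (hX : X ^ 2 = 1 / 2 + (cm * cn - sm * sn) / 2)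
    (hY : Y ^ 2 = 1 / 2 + (cm * cn + sm * sn) / 2) :
    (σ₂ + σ₁) * X ^ 2 * (σ₁ * (sn * D - cn * E) - σ₂ * (sm * D - cm * E))
      = (σ₂ - σ₁) * Y ^ 2 * (σ₂ * (sm * D + cm * E) - σ₁ * (sn * D - cn * E)) := by
  linear_combination (-E * (σ₂ * cm * sn + σ₁ * cn * sm)
      - D * ((σ₂ + σ₁) * X ^ 2 + (σ₂ - σ₁) * Y ^ 2)) * hmn
    + E * σ₁ * σ₂ * cn * hm - E * σ₁ * σ₂ * cm * hn
    + E * (σ₂ + σ₁) * (σ₂ * cm - σ₁ * cn) * hX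
    - E * (σ₂ - σ₁) * (σ₂ * cm + σ₁ * cn) * hY

private lemma hXval (a b c d : ℝ) :
    Real.cos ((d - a) / 2) ^ 2 = 1 / 2 +
      (Real.cos ((d + b - c - a) / 2) * Real.cos ((d + c - a - b) / 2)
        - Real.sin ((d + b - c - a) / 2) * Real.sin ((d + c - a - b) / 2)) / 2 := by
  rw [Real.cos_sq, show 2 * ((d - a) / 2) = (d + b - c - a) / 2 + (d + c - a - b) / 2 by ring,
    Real.cos_add]

private lemma hYval (a b c d : ℝ) :
    Real.cos ((c - b) / 2) ^ 2 = 1 / 2 +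
      (Real.cos ((d + b - c - a) / 2) * Real.cos ((d + c - a - b) / 2)
        + Real.sin ((d + b - c - a) / 2) * Real.sin ((d + c - a - b) / 2)) / 2 := by
  rw [Real.cos_sq, show 2 * ((c - b) / 2) = (d + c - a - b) / 2 - (d + b - c - a) / 2 by ring,
    Real.cos_sub]
  ring

private lemma iplus1 (σ₁ σ₂ a b c d : ℝ)
    (hcon : σ₂ * Real.sin ((d + b - c - a) / 2) = σ₁ * Real.sin ((d + c - a - b) / 2)) :
    (σ₂ + σ₁) * Real.cos ((d - a) / 2) ^ 2 * (σ₂ * Real.sin (c + a) - σ₁ * Real.sin (b + a))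
      = (σ₂ - σ₁) * Real.cos ((c - b) / 2) ^ 2
        * (σ₂ * Real.sin (d + b) + σ₁ * Real.sin (b + a)) := by
  have e1 : Real.sin (c + a) = Real.sin ((d + b + c + a) / 2) * Real.cos ((d + b - c - a) / 2) - Real.cos ((d + b + c + a) / 2) * Real.sin ((d + b - c - a) / 2) := by
    rw [← Real.sin_sub]; congr 1; ring
  have e2 : Real.sin (b + a) = Real.sin ((d + b + c + a) / 2) * Real.cos ((d + c - a - b) / 2) - Real.cos ((d + b + c + a) / 2) * Real.sin ((d + c - a - b) / 2) := by
    rw [← Real.sin_sub]; congr 1; ring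
  have e3 : Real.sin (d + b) = Real.sin ((d + b + c + a) / 2) * Real.cos ((d + b - c - a) / 2) + Real.cos ((d + b + c + a) / 2) * Real.sin ((d + b - c - a) / 2) := by
    rw [← Real.sin_add]; congr 1; ring
  rw [e1, e2, e3]
  exact igen1 σ₁ σ₂ (Real.sin ((d + b + c + a) / 2)) (Real.cos ((d + b + c + a) / 2))
    (Real.sin ((d + b - c - a) / 2)) (Real.cos ((d + b - c - a) / 2))
    (Real.sin ((d + c - a - b) / 2)) (Real.cos ((d + c - a - b) / 2))
    (Real.cos ((d - a) / 2)) (Real.cos ((c - b) / 2)) hcon (Real.sin_sq_add_cos_sq _)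
    (Real.sin_sq_add_cos_sq _) (hXval a b c d) (hYval a b c d)

private lemma iplus2 (σ₁ σ₂ a b c d : ℝ)
    (hcon : σ₂ * Real.sin ((d + b - c - a) / 2) = σ₁ * Real.sin ((d + c - a - b) / 2)) :
    (σ₂ + σ₁) * Real.cos ((d - a) / 2) ^ 2 * (σ₂ * Real.sin (c + a) - σ₁ * Real.sin (b + a))
      = (σ₂ - σ₁) * Real.cos ((c - b) / 2) ^ 2
        * (σ₁ * Real.sin (d + c) + σ₂ * Real.sin (c + a)) := by
  have e1 : Real.sin (c + a) = Real.sin ((d + b + c + a) / 2) * Real.cos ((d + b - c - a) / 2) - Real.cos ((d + b + c + a) / 2) * Real.sin ((d + b - c - a) / 2) := by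
    rw [← Real.sin_sub]; congr 1; ring
  have e2 : Real.sin (b + a) = Real.sin ((d + b + c + a) / 2) * Real.cos ((d + c - a - b) / 2) - Real.cos ((d + b + c + a) / 2) * Real.sin ((d + c - a - b) / 2) := by
    rw [← Real.sin_sub]; congr 1; ring
  have e3 : Real.sin (d + c) = Real.sin ((d + b + c + a) / 2) * Real.cos ((d + c - a - b) / 2) + Real.cos ((d + b + c + a) / 2) * Real.sin ((d + c - a - b) / 2) := by
    rw [← Real.sin_add]; congr 1; ring
  rw [e1, e2, e3]
  exact igen2 σ₁ σ₂ (Real.sin ((d + b + c + a) / 2)) (Real.cos ((d + b + c + a) / 2))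
    (Real.sin ((d + b - c - a) / 2)) (Real.cos ((d + b - c - a) / 2))
    (Real.sin ((d + c - a - b) / 2)) (Real.cos ((d + c - a - b) / 2))
    (Real.cos ((d - a) / 2)) (Real.cos ((c - b) / 2)) hcon (Real.sin_sq_add_cos_sq _)
    (Real.sin_sq_add_cos_sq _) (hXval a b c d) (hYval a b c d)

private lemma iminus1 (σ₁ σ₂ a b c d : ℝ)
    (hcon : σ₂ * Real.sin ((d + b - c - a) / 2) = σ₁ * Real.sin ((d + c - a - b) / 2)) :
    (σ₂ + σ₁) * Real.cos ((d - a) / 2) ^ 2 * (σ₁ * Real.sin (c - a) - σ₂ * Real.sin (b - a))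
      = (σ₂ - σ₁) * Real.cos ((c - b) / 2) ^ 2
        * (σ₁ * Real.sin (d - b) - σ₂ * Real.sin (b - a)) := by
  have e1 : Real.sin (c - a) = Real.sin ((d + c - a - b) / 2) * Real.cos ((a + d - b - c) / 2) - Real.cos ((d + c - a - b) / 2) * Real.sin ((a + d - b - c) / 2) := by
    rw [← Real.sin_sub]; congr 1; ring
  have e2 : Real.sin (b - a) = Real.sin ((d + b - c - a) / 2) * Real.cos ((a + d - b - c) / 2) - Real.cos ((d + b - c - a) / 2) * Real.sin ((a + d - b - c) / 2) := by
    rw [← Real.sin_sub]; congr 1; ring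
  have e3 : Real.sin (d - b) = Real.sin ((d + c - a - b) / 2) * Real.cos ((a + d - b - c) / 2) + Real.cos ((d + c - a - b) / 2) * Real.sin ((a + d - b - c) / 2) := by
    rw [← Real.sin_add]; congr 1; ring
  rw [e1, e2, e3]
  exact igen3 σ₁ σ₂ (Real.cos ((a + d - b - c) / 2)) (Real.sin ((a + d - b - c) / 2))
    (Real.sin ((d + b - c - a) / 2)) (Real.cos ((d + b - c - a) / 2))
    (Real.sin ((d + c - a - b) / 2)) (Real.cos ((d + c - a - b) / 2))
    (Real.cos ((d - a) / 2)) (Real.cos ((c - b) / 2)) hcon (Real.sin_sq_add_cos_sq _)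
    (Real.sin_sq_add_cos_sq _) (hXval a b c d) (hYval a b c d)

private lemma iminus2 (σ₁ σ₂ a b c d : ℝ)
    (hcon : σ₂ * Real.sin ((d + b - c - a) / 2) = σ₁ * Real.sin ((d + c - a - b) / 2)) :
    (σ₂ + σ₁) * Real.cos ((d - a) / 2) ^ 2 * (σ₁ * Real.sin (c - a) - σ₂ * Real.sin (b - a))
      = (σ₂ - σ₁) * Real.cos ((c - b) / 2) ^ 2
        * (σ₂ * Real.sin (d - c) - σ₁ * Real.sin (c - a)) := by
  have e1 : Real.sin (c - a) = Real.sin ((d + c - a - b) / 2) * Real.cos ((a + d - b - c) / 2) - Real.cos ((d + c - a - b) / 2) * Real.sin ((a + d - b - c) / 2) := by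
    rw [← Real.sin_sub]; congr 1; ring
  have e2 : Real.sin (b - a) = Real.sin ((d + b - c - a) / 2) * Real.cos ((a + d - b - c) / 2) - Real.cos ((d + b - c - a) / 2) * Real.sin ((a + d - b - c) / 2) := by
    rw [← Real.sin_sub]; congr 1; ring
  have e3 : Real.sin (d - c) = Real.sin ((d + b - c - a) / 2) * Real.cos ((a + d - b - c) / 2) + Real.cos ((d + b - c - a) / 2) * Real.sin ((a + d - b - c) / 2) := by
    rw [← Real.sin_add]; congr 1; ring
  rw [e1, e2, e3]
  exact igen4 σ₁ σ₂ (Real.cos ((a + d - b - c) / 2)) (Real.sin ((a + d - b - c) / 2))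
    (Real.sin ((d + b - c - a) / 2)) (Real.cos ((d + b - c - a) / 2))
    (Real.sin ((d + c - a - b) / 2)) (Real.cos ((d + c - a - b) / 2))
    (Real.cos ((d - a) / 2)) (Real.cos ((c - b) / 2)) hcon (Real.sin_sq_add_cos_sq _)
    (Real.sin_sq_add_cos_sq _) (hXval a b c d) (hYval a b c d)

private lemma hasDerivAt_pdu (f : ℝ × ℝ → ℝ) (hf : ContDiff ℝ (⊤ : ℕ∞) f) (x y : ℝ) :
    HasDerivAt (fun u => f (u, y)) (pdu f (x, y)) x := by
  have h : DifferentiableAt ℝ (fun u => f (u, y)) x := by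
    have h1 : DifferentiableAt ℝ f (x, y) := (hf.differentiable (by simp)).differentiableAt
    exact h1.comp x (DifferentiableAt.prodMk differentiableAt_id (differentiableAt_const _))
  exact h.hasDerivAt

private lemma hasDerivAt_pdv (f : ℝ × ℝ → ℝ) (hf : ContDiff ℝ (⊤ : ℕ∞) f) (x y : ℝ) :
    HasDerivAt (fun v => f (x, v)) (pdv f (x, y)) y := by
  have h : DifferentiableAt ℝ (fun v => f (x, v)) y := by
    have h1 : DifferentiableAt ℝ f (x, y) := (hf.differentiable (by simp)).differentiableAt
    exact h1.comp y (DifferentiableAt.prodMk (differentiableAt_const _) differentiableAt_id)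
  exact h.hasDerivAt

end auxiliary

/-- Bianchi Permutability Theorem for the hyperbolic sine-Gordon equation: if
`ω₁ = B_{σ₁}(ω₀)`, `ω₂ = B_{σ₂}(ω₀)` and `ω₃` satisfies
`tan((ω₃−ω₀)/2) = ((σ₂+σ₁)/(σ₂−σ₁))·tan((ω₂−ω₁)/2)` (with the relevant cosines
nonvanishing), then `ω₃ = B_{σ₂}(ω₁) = B_{σ₁}(ω₂)`. -/
theorem bianchi_permutability_hyperbolic_sineGordon
    (σ₁ σ₂ : ℝ) (hσ₁ : σ₁ ≠ 0) (hσ₂ : σ₂ ≠ 0) (hσ : σ₁ ≠ σ₂)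
    (ω₀ ω₁ ω₂ ω₃ : ℝ × ℝ → ℝ)
    (h₀ : ContDiff ℝ (⊤ : ℕ∞) ω₀) (h₁ : ContDiff ℝ (⊤ : ℕ∞) ω₁)
    (h₂ : ContDiff ℝ (⊤ : ℕ∞) ω₂) (h₃ : ContDiff ℝ (⊤ : ℕ∞) ω₃)
    (hB₁ : BacklundSG σ₁ ω₀ ω₁) (hB₂ : BacklundSG σ₂ ω₀ ω₂)
    (hcos₃₀ : ∀ p : ℝ × ℝ, Real.cos ((ω₃ p - ω₀ p) / 2) ≠ 0)
    (hcos₂₁ : ∀ p : ℝ × ℝ, Real.cos ((ω₂ p - ω₁ p) / 2) ≠ 0)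
    (hbpt : ∀ p : ℝ × ℝ,
      Real.tan ((ω₃ p - ω₀ p) / 2) =
        (σ₂ + σ₁) / (σ₂ - σ₁) * Real.tan ((ω₂ p - ω₁ p) / 2)) :
    BacklundSG σ₂ ω₁ ω₃ ∧ BacklundSG σ₁ ω₂ ω₃ := by
  have hσ' : σ₂ - σ₁ ≠ 0 := sub_ne_zero.mpr (Ne.symm hσ)
  have main : ∀ q : ℝ × ℝ,
      (pdv ω₃ q - pdu ω₁ q =
          (σ₂ * Real.sin (ω₃ q + ω₁ q) + σ₂⁻¹ * Real.sin (ω₃ q - ω₁ q)) / 2 ∧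
        pdu ω₃ q - pdv ω₁ q =
          (σ₂ * Real.sin (ω₃ q + ω₁ q) - σ₂⁻¹ * Real.sin (ω₃ q - ω₁ q)) / 2) ∧
      (pdv ω₃ q - pdu ω₂ q =
          (σ₁ * Real.sin (ω₃ q + ω₂ q) + σ₁⁻¹ * Real.sin (ω₃ q - ω₂ q)) / 2 ∧
        pdu ω₃ q - pdv ω₂ q =
          (σ₁ * Real.sin (ω₃ q + ω₂ q) - σ₁⁻¹ * Real.sin (ω₃ q - ω₂ q)) / 2) := by
    rintro ⟨x, y⟩
    have hXne : Real.cos ((ω₃ (x, y) - ω₀ (x, y)) / 2) ≠ 0 := hcos₃₀ (x, y)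
    have hYne : Real.cos ((ω₂ (x, y) - ω₁ (x, y)) / 2) ≠ 0 := hcos₂₁ (x, y)
    -- the constraint, cleared of denominators
    have hcon : σ₂ * Real.sin ((ω₃ (x, y) + ω₁ (x, y) - ω₂ (x, y) - ω₀ (x, y)) / 2)
        = σ₁ * Real.sin ((ω₃ (x, y) + ω₂ (x, y) - ω₀ (x, y) - ω₁ (x, y)) / 2) := by
      have hT := hbpt (x, y)
      rw [Real.tan_eq_sin_div_cos, Real.tan_eq_sin_div_cos] at hT
      field_simp at hT
      rw [show (ω₃ (x, y) + ω₁ (x, y) - ω₂ (x, y) - ω₀ (x, y)) / 2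
            = (ω₃ (x, y) - ω₀ (x, y)) / 2 - (ω₂ (x, y) - ω₁ (x, y)) / 2 by ring,
        Real.sin_sub,
        show (ω₃ (x, y) + ω₂ (x, y) - ω₀ (x, y) - ω₁ (x, y)) / 2
            = (ω₃ (x, y) - ω₀ (x, y)) / 2 + (ω₂ (x, y) - ω₁ (x, y)) / 2 by ring,
        Real.sin_add]
      linear_combination hT
    -- derivative of the permutability relation in the v direction
    have hv30 : (pdv ω₃ (x, y) - pdv ω₀ (x, y)) * (σ₂ - σ₁)
          * Real.cos ((ω₂ (x, y) - ω₁ (x, y)) / 2) ^ 2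
        = (σ₂ + σ₁) * Real.cos ((ω₃ (x, y) - ω₀ (x, y)) / 2) ^ 2
          * (pdv ω₂ (x, y) - pdv ω₁ (x, y)) := by
      have hd3 : HasDerivAt (fun v => (ω₃ (x, v) - ω₀ (x, v)) / 2)
          ((pdv ω₃ (x, y) - pdv ω₀ (x, y)) / 2) y :=
        ((hasDerivAt_pdv ω₃ h₃ x y).sub (hasDerivAt_pdv ω₀ h₀ x y)).div_const 2
      have hd21 : HasDerivAt (fun v => (ω₂ (x, v) - ω₁ (x, v)) / 2)
          ((pdv ω₂ (x, y) - pdv ω₁ (x, y)) / 2) y :=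
        ((hasDerivAt_pdv ω₂ h₂ x y).sub (hasDerivAt_pdv ω₁ h₁ x y)).div_const 2
      have ht3 : HasDerivAt (fun v => Real.tan ((ω₃ (x, v) - ω₀ (x, v)) / 2))
          (1 / Real.cos ((ω₃ (x, y) - ω₀ (x, y)) / 2) ^ 2
            * ((pdv ω₃ (x, y) - pdv ω₀ (x, y)) / 2)) y := by
        simpa [Function.comp_def] using (Real.hasDerivAt_tan hXne).comp y hd3
      have ht21 : HasDerivAt
          (fun v => (σ₂ + σ₁) / (σ₂ - σ₁) * Real.tan ((ω₂ (x, v) - ω₁ (x, v)) / 2))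
          ((σ₂ + σ₁) / (σ₂ - σ₁) * (1 / Real.cos ((ω₂ (x, y) - ω₁ (x, y)) / 2) ^ 2
            * ((pdv ω₂ (x, y) - pdv ω₁ (x, y)) / 2))) y := by
        have := ((Real.hasDerivAt_tan hYne).comp y hd21).const_mul ((σ₂ + σ₁) / (σ₂ - σ₁))
        simpa [Function.comp] using this
      have hfeq : (fun v => Real.tan ((ω₃ (x, v) - ω₀ (x, v)) / 2))
          = fun v => (σ₂ + σ₁) / (σ₂ - σ₁) * Real.tan ((ω₂ (x, v) - ω₁ (x, v)) / 2) :=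
        funext fun v => hbpt (x, v)
      rw [hfeq] at ht3
      have heq := ht3.unique ht21
      field_simp at heq
      linear_combination heq
    -- derivative of the permutability relation in the u direction
    have hu30 : (pdu ω₃ (x, y) - pdu ω₀ (x, y)) * (σ₂ - σ₁)
          * Real.cos ((ω₂ (x, y) - ω₁ (x, y)) / 2) ^ 2
        = (σ₂ + σ₁) * Real.cos ((ω₃ (x, y) - ω₀ (x, y)) / 2) ^ 2
          * (pdu ω₂ (x, y) - pdu ω₁ (x, y)) := by
      have hd3 : HasDerivAt (fun u => (ω₃ (u, y) - ω₀ (u, y)) / 2)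
          ((pdu ω₃ (x, y) - pdu ω₀ (x, y)) / 2) x :=
        ((hasDerivAt_pdu ω₃ h₃ x y).sub (hasDerivAt_pdu ω₀ h₀ x y)).div_const 2
      have hd21 : HasDerivAt (fun u => (ω₂ (u, y) - ω₁ (u, y)) / 2)
          ((pdu ω₂ (x, y) - pdu ω₁ (x, y)) / 2) x :=
        ((hasDerivAt_pdu ω₂ h₂ x y).sub (hasDerivAt_pdu ω₁ h₁ x y)).div_const 2
      have ht3 : HasDerivAt (fun u => Real.tan ((ω₃ (u, y) - ω₀ (u, y)) / 2))
          (1 / Real.cos ((ω₃ (x, y) - ω₀ (x, y)) / 2) ^ 2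
            * ((pdu ω₃ (x, y) - pdu ω₀ (x, y)) / 2)) x := by
        simpa [Function.comp_def] using (Real.hasDerivAt_tan hXne).comp x hd3
      have ht21 : HasDerivAt
          (fun u => (σ₂ + σ₁) / (σ₂ - σ₁) * Real.tan ((ω₂ (u, y) - ω₁ (u, y)) / 2))
          ((σ₂ + σ₁) / (σ₂ - σ₁) * (1 / Real.cos ((ω₂ (x, y) - ω₁ (x, y)) / 2) ^ 2
            * ((pdu ω₂ (x, y) - pdu ω₁ (x, y)) / 2))) x := by
        have := ((Real.hasDerivAt_tan hYne).comp x hd21).const_mul ((σ₂ + σ₁) / (σ₂ - σ₁))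
        simpa [Function.comp] using this
      have hfeq : (fun u => Real.tan ((ω₃ (u, y) - ω₀ (u, y)) / 2))
          = fun u => (σ₂ + σ₁) / (σ₂ - σ₁) * Real.tan ((ω₂ (u, y) - ω₁ (u, y)) / 2) :=
        funext fun u => hbpt (u, y)
      rw [hfeq] at ht3
      have heq := ht3.unique ht21
      field_simp at heq
      linear_combination heq
    -- denominator-free versions of the hypotheses
    have ha1 : 2 * σ₁ * (pdv ω₁ (x, y) - pdu ω₀ (x, y))
        = σ₁ ^ 2 * Real.sin (ω₁ (x, y) + ω₀ (x, y)) + Real.sin (ω₁ (x, y) - ω₀ (x, y)) := by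
      rw [(hB₁ (x, y)).1]; field_simp
    have ha2 : 2 * σ₁ * (pdu ω₁ (x, y) - pdv ω₀ (x, y))
        = σ₁ ^ 2 * Real.sin (ω₁ (x, y) + ω₀ (x, y)) - Real.sin (ω₁ (x, y) - ω₀ (x, y)) := by
      rw [(hB₁ (x, y)).2]; field_simp
    have hb1 : 2 * σ₂ * (pdv ω₂ (x, y) - pdu ω₀ (x, y))
        = σ₂ ^ 2 * Real.sin (ω₂ (x, y) + ω₀ (x, y)) + Real.sin (ω₂ (x, y) - ω₀ (x, y)) := by
      rw [(hB₂ (x, y)).1]; field_simp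
    have hb2 : 2 * σ₂ * (pdu ω₂ (x, y) - pdv ω₀ (x, y))
        = σ₂ ^ 2 * Real.sin (ω₂ (x, y) + ω₀ (x, y)) - Real.sin (ω₂ (x, y) - ω₀ (x, y)) := by
      rw [(hB₂ (x, y)).2]; field_simp
    -- the four permutability identities
    have Ip1 := iplus1 σ₁ σ₂ (ω₀ (x, y)) (ω₁ (x, y)) (ω₂ (x, y)) (ω₃ (x, y)) hcon
    have Ip2 := iplus2 σ₁ σ₂ (ω₀ (x, y)) (ω₁ (x, y)) (ω₂ (x, y)) (ω₃ (x, y)) hcon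
    have Im1 := iminus1 σ₁ σ₂ (ω₀ (x, y)) (ω₁ (x, y)) (ω₂ (x, y)) (ω₃ (x, y)) hcon
    have Im2 := iminus2 σ₁ σ₂ (ω₀ (x, y)) (ω₁ (x, y)) (ω₂ (x, y)) (ω₃ (x, y)) hcon
    have hM : σ₁ * (σ₂ - σ₁) * Real.cos ((ω₂ (x, y) - ω₁ (x, y)) / 2) ^ 2 ≠ 0 :=
      mul_ne_zero (mul_ne_zero hσ₁ hσ') (pow_ne_zero 2 hYne)
    have hN : σ₂ * (σ₂ - σ₁) * Real.cos ((ω₂ (x, y) - ω₁ (x, y)) / 2) ^ 2 ≠ 0 :=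
      mul_ne_zero (mul_ne_zero hσ₂ hσ') (pow_ne_zero 2 hYne)
    have g1 : 2 * σ₂ * (pdv ω₃ (x, y) - pdu ω₁ (x, y))
        = σ₂ ^ 2 * Real.sin (ω₃ (x, y) + ω₁ (x, y)) + Real.sin (ω₃ (x, y) - ω₁ (x, y)) := by
      refine mul_right_cancel₀ hM ?_
      linear_combination (2 * σ₁ * σ₂) * hv30
        + (σ₁ * (σ₂ + σ₁) * Real.cos ((ω₃ (x, y) - ω₀ (x, y)) / 2) ^ 2) * hb1
        + (-(σ₂ * (σ₂ + σ₁) * Real.cos ((ω₃ (x, y) - ω₀ (x, y)) / 2) ^ 2)) * ha1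
        + (-(σ₂ * (σ₂ - σ₁) * Real.cos ((ω₂ (x, y) - ω₁ (x, y)) / 2) ^ 2)) * ha2
        + (σ₁ * σ₂) * Ip1 + Im1
    have g2 : 2 * σ₂ * (pdu ω₃ (x, y) - pdv ω₁ (x, y))
        = σ₂ ^ 2 * Real.sin (ω₃ (x, y) + ω₁ (x, y)) - Real.sin (ω₃ (x, y) - ω₁ (x, y)) := by
      refine mul_right_cancel₀ hM ?_
      linear_combination (2 * σ₁ * σ₂) * hu30
        + (σ₁ * (σ₂ + σ₁) * Real.cos ((ω₃ (x, y) - ω₀ (x, y)) / 2) ^ 2) * hb2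
        + (-(σ₂ * (σ₂ + σ₁) * Real.cos ((ω₃ (x, y) - ω₀ (x, y)) / 2) ^ 2)) * ha2
        + (-(σ₂ * (σ₂ - σ₁) * Real.cos ((ω₂ (x, y) - ω₁ (x, y)) / 2) ^ 2)) * ha1
        + (σ₁ * σ₂) * Ip1 - Im1
    have g3 : 2 * σ₁ * (pdv ω₃ (x, y) - pdu ω₂ (x, y))
        = σ₁ ^ 2 * Real.sin (ω₃ (x, y) + ω₂ (x, y)) + Real.sin (ω₃ (x, y) - ω₂ (x, y)) := by
      refine mul_right_cancel₀ hN ?_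
      linear_combination (2 * σ₁ * σ₂) * hv30
        + (σ₁ * (σ₂ + σ₁) * Real.cos ((ω₃ (x, y) - ω₀ (x, y)) / 2) ^ 2) * hb1
        + (-(σ₂ * (σ₂ + σ₁) * Real.cos ((ω₃ (x, y) - ω₀ (x, y)) / 2) ^ 2)) * ha1
        + (-(σ₁ * (σ₂ - σ₁) * Real.cos ((ω₂ (x, y) - ω₁ (x, y)) / 2) ^ 2)) * hb2
        + (σ₁ * σ₂) * Ip2 + Im2
    have g4 : 2 * σ₁ * (pdu ω₃ (x, y) - pdv ω₂ (x, y))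
        = σ₁ ^ 2 * Real.sin (ω₃ (x, y) + ω₂ (x, y)) - Real.sin (ω₃ (x, y) - ω₂ (x, y)) := by
      refine mul_right_cancel₀ hN ?_
      linear_combination (2 * σ₁ * σ₂) * hu30
        + (σ₁ * (σ₂ + σ₁) * Real.cos ((ω₃ (x, y) - ω₀ (x, y)) / 2) ^ 2) * hb2
        + (-(σ₂ * (σ₂ + σ₁) * Real.cos ((ω₃ (x, y) - ω₀ (x, y)) / 2) ^ 2)) * ha2
        + (-(σ₁ * (σ₂ - σ₁) * Real.cos ((ω₂ (x, y) - ω₁ (x, y)) / 2) ^ 2)) * hb1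
        + (σ₁ * σ₂) * Ip2 - Im2
    refine ⟨⟨?_, ?_⟩, ?_, ?_⟩
    · field_simp
      linear_combination g1
    · field_simp
      linear_combination g2
    · field_simp
      linear_combination g3
    · field_simp
      linear_combination g4
  exact ⟨fun p => (main p).1, fun p => (main p).2⟩
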